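/- arXiv:2605.21355 — 2 statements merged into one kernel-verified Lean document; each statement's English description precedes it below -/
import Mathlib

section
/- Suppose a_n = n^α (1 + c_a/n + O(1/n²)) with a_n > 0, α > 0, c_a ∈ ℝ. Then the sequence of ratios (a_{n-1}/a_n) has finite total variation: ∑_{n≥2} |a_{n-1}/a_n − a_{n-2}/a_{n-1}| < ∞. -/
/-!
With `u n = a n / n ^ α` we have `a n / a (n + 1) = (n / (n + 1)) ^ α * u n / u (n + 1)`.
The expansion `u n = 1 + c_a / n + O(1 / n²)` gives `u n → 1` and `u n - u (n + 1) = O(1 / n²)`,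
so the ratio differs from the monotone convergent sequence `(n / (n + 1)) ^ α` by a summable
sequence. A monotone convergent sequence has finite total variation, and a summable perturbation
does not change that.
-/

open Filter Asymptotics Topology

lemma summable_abs_sub_succ_of_monotone {s : ℕ → ℝ} {l : ℝ} (hs : Monotone s)
    (hl : Tendsto s atTop (𝓝 l)) : Summable fun n => |s (n + 1) - s n| := by
  have hinc (n : ℕ) : 0 ≤ s (n + 1) - s n := sub_nonneg.2 (hs n.le_succ)
  simp_rw [abs_of_nonneg (hinc _)]
  refine summable_of_sum_range_le (c := l - s 0) hinc fun n => ?_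
  rw [Finset.sum_range_sub]
  linarith [hs.ge_of_tendsto hl n]

lemma summable_abs_sub_succ_of_summable_abs_sub {r s : ℕ → ℝ}
    (hs : Summable fun n => |s (n + 1) - s n|) (hrs : Summable fun n => |r n - s n|) :
    Summable fun n => |r (n + 1) - r n| := by
  refine .of_nonneg_of_le (fun n => abs_nonneg _) (fun n => ?_)
    ((((summable_nat_add_iff 1).2 hrs).add hs).add hrs)
  rw [abs_sub_comm (r n) (s n)]
  linarith [abs_sub_le (r (n + 1)) (s (n + 1)) (r n), abs_sub_le (s (n + 1)) (s n) (r n)]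

lemma isBigO_const_div_sub_const_div_succ (c : ℝ) :
    (fun n : ℕ => c / n - c / (n + 1)) =O[atTop] fun n => 1 / (n : ℝ) ^ 2 := by
  refine .of_bound |c| ?_
  filter_upwards [eventually_gt_atTop 0] with n hn
  have : (0 : ℝ) < n := by exact_mod_cast hn
  have hdiff : c / n - c / (n + 1) = c * (1 / (n * (n + 1))) := by field_simp; ring
  rw [hdiff, norm_mul, Real.norm_eq_abs]
  gcongr
  rw [Real.norm_eq_abs, Real.norm_eq_abs, abs_of_pos (by positivity), abs_of_pos (by positivity)]
  gcongr
  linarith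

lemma Asymptotics.IsBigO.comp_succ_one_div_sq {f : ℕ → ℝ}
    (hf : f =O[atTop] fun n => 1 / (n : ℝ) ^ 2) :
    (fun n => f (n + 1)) =O[atTop] fun n => 1 / (n : ℝ) ^ 2 := by
  refine (hf.comp_tendsto (tendsto_add_atTop_nat 1)).trans (.of_bound 1 ?_)
  filter_upwards [eventually_gt_atTop 0] with n hn
  have : (0 : ℝ) < n := by exact_mod_cast hn
  simp only [Function.comp_def, Nat.cast_add, Nat.cast_one, norm_div, norm_one, norm_pow,
    Real.norm_eq_abs, one_mul, Nat.abs_cast]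
  gcongr
  rw [abs_of_pos (by positivity)]
  linarith

lemma tendsto_one_of_isBigO_sub_one_sub_div {u : ℕ → ℝ} {c : ℝ}
    (hu : (fun n : ℕ => u n - 1 - c / n) =O[atTop] fun n => 1 / (n : ℝ) ^ 2) :
    Tendsto u atTop (𝓝 1) := by
  have he := hu.trans_tendsto <| tendsto_const_nhds.div_atTop <|
    (tendsto_pow_atTop two_ne_zero).comp tendsto_natCast_atTop_atTop
  have := (he.add_const 1).add (tendsto_const_div_atTop_nhds_zero_nat c)
  rw [zero_add, add_zero] at this
  exact this.congr fun n => by ring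

lemma isBigO_sub_succ_of_isBigO_sub_one_sub_div {u : ℕ → ℝ} {c : ℝ}
    (hu : (fun n : ℕ => u n - 1 - c / n) =O[atTop] fun n => 1 / (n : ℝ) ^ 2) :
    (fun n => u n - u (n + 1)) =O[atTop] fun n => 1 / (n : ℝ) ^ 2 :=
  ((hu.sub hu.comp_succ_one_div_sq).add (isBigO_const_div_sub_const_div_succ c)).congr_left
    fun n => by push_cast; ring

lemma div_sub_div_rpow_eq {a b x y : ℝ} (p : ℝ) (hb : b ≠ 0) (hx : 0 < x) (hy : 0 < y) :
    a / b - (x / y) ^ p = (x / y) ^ p * (a / x ^ p - b / y ^ p) * (b / y ^ p)⁻¹ := by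
  rw [Real.div_rpow hx.le hy.le]
  have := Real.rpow_pos_of_pos hx p
  have := Real.rpow_pos_of_pos hy p
  field_simp

lemma tendsto_natCast_div_add_one_rpow (p : ℝ) :
    Tendsto (fun n : ℕ => ((n : ℝ) / (n + 1)) ^ p) atTop (𝓝 1) := by
  simpa using (tendsto_natCast_div_add_atTop (1 : ℝ)).rpow_const (Or.inl one_ne_zero)

lemma monotone_natCast_div_add_one_rpow {p : ℝ} (hp : 0 ≤ p) :
    Monotone fun n : ℕ => ((n : ℝ) / (n + 1)) ^ p := by
  intro m n hmn
  have : (m : ℝ) ≤ n := by exact_mod_cast hmn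
  refine Real.rpow_le_rpow (by positivity) ?_ hp
  rw [div_le_div_iff₀ (by positivity) (by positivity)]
  linarith

lemma summable_abs_div_succ_sub_rpow (a : ℕ → ℝ) (p c : ℝ)
    (ha : (fun n : ℕ => a n / (n : ℝ) ^ p - 1 - c / n) =O[atTop] fun n => 1 / (n : ℝ) ^ 2) :
    Summable fun n => |a n / a (n + 1) - ((n : ℝ) / (n + 1)) ^ p| := by
  set u : ℕ → ℝ := fun n => a n / (n : ℝ) ^ p
  have hlim : Tendsto (fun n => u (n + 1)) atTop (𝓝 1) :=
    (tendsto_one_of_isBigO_sub_one_sub_div ha).comp (tendsto_add_atTop_nat 1)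
  have hratio := (tendsto_natCast_div_add_one_rpow p).isBigO_one ℝ
  have hinv := (hlim.inv₀ one_ne_zero).isBigO_one ℝ
  have hne : ∀ᶠ n in atTop, a (n + 1) ≠ 0 := by
    filter_upwards [hlim.eventually_ne one_ne_zero] with n hn h
    simp [u, h] at hn
  refine (summable_of_isBigO_nat (Real.summable_one_div_nat_pow.2 one_lt_two) ?_).abs
  refine ((hratio.mul (isBigO_sub_succ_of_isBigO_sub_one_sub_div ha)).mul hinv).congr' ?_
    (.of_eq (by simp))
  filter_upwards [hne, eventually_gt_atTop 0] with n hn hpos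
  rw [div_sub_div_rpow_eq p hn (by positivity) (by positivity)]
  push_cast [u]
  rfl

theorem ratio_a_bounded_variation_general (a : ℕ → ℝ)
    (α ca C : ℝ) (hα : 0 < α) (N : ℕ)
    (hasym : ∀ n : ℕ, N ≤ n → |a n / (n : ℝ) ^ α - 1 - ca / n| ≤ C / (n : ℝ) ^ 2) :
    Summable (fun n : ℕ => |a (n + 1) / a (n + 2) - a n / a (n + 1)|) := by
  have hu : (fun n : ℕ => a n / (n : ℝ) ^ α - 1 - ca / n) =O[atTop] fun n => 1 / (n : ℝ) ^ 2 :=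
    .of_bound C <| eventually_atTop.2 ⟨N, fun n hn => by
      simpa [div_eq_mul_inv] using hasym n hn⟩
  exact summable_abs_sub_succ_of_summable_abs_sub (r := fun n => a n / a (n + 1))
    (summable_abs_sub_succ_of_monotone (monotone_natCast_div_add_one_rpow hα.le)
      (tendsto_natCast_div_add_one_rpow α))
    (summable_abs_div_succ_sub_rpow a α ca hu)

/-- If `a_n = n^α (1 + c_a/n + O(1/n²))` with `a_n > 0` and `α > 0`, then the sequence of
ratios `(a_{n-1}/a_n)` has finite total variation:
`∑_{n≥2} |a_{n-1}/a_n − a_{n-2}/a_{n-1}| < ∞`. -/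
theorem ratio_a_bounded_variation (a : ℕ → ℝ) (ha : ∀ n, 0 < a n)
    (α ca C : ℝ) (hα : 0 < α) (N : ℕ)
    (hasym : ∀ n : ℕ, N ≤ n → |a n / (n : ℝ) ^ α - 1 - ca / n| ≤ C / (n : ℝ) ^ 2) :
    Summable (fun n : ℕ => |a (n + 1) / a (n + 2) - a n / a (n + 1)|) :=
  ratio_a_bounded_variation_general a α ca C hα N hasym
end

section
/- Let k ≥ 3 and h satisfy 2h > k, and fix m ∈ {0,…,k−1}. Define a^{(k,m)}_r = k^{−k/2} √((m+rk+1, k)) (Pochhammer symbol) and f^{(k,h,m)}_r = k^{−h}(m+rk)^h. Then the ratio d_r = f^{(k,h,m)}_r / a^{(k,m)}_r is strictly increasing in r: d_{r+1} > d_r for all r ∈ ℕ with r ≥ 1. -/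
open Finset

/-- For `k ≥ 3`, `2h > k`, `m < k`, the ratio
`d_r = f^{(k,h,m)}_r / a^{(k,m)}_r` with `a^{(k,m)}_r = k^{−k/2}√((m+rk+1,k))` and
`f^{(k,h,m)}_r = k^{−h}(m+rk)^h` is strictly increasing in `r ≥ 1`. -/
theorem squeezing_ratio_strict_mono (k h m : ℕ) (hk : 3 ≤ k) (hh : k < 2 * h) (hm : m < k)
    (a f d : ℕ → ℝ)
    (hadef : ∀ r : ℕ, a r
      = (k : ℝ) ^ (-(k : ℝ) / 2) *
        Real.sqrt (∏ i ∈ Finset.range k, ((m : ℝ) + r * k + 1 + i)))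
    (hfdef : ∀ r : ℕ, f r = (k : ℝ) ^ (-(h : ℝ)) * ((m : ℝ) + r * k) ^ h)
    (hddef : ∀ r : ℕ, d r = f r / a r) :
    ∀ r : ℕ, 1 ≤ r → d r < d (r + 1) := by
  intro r hr
  have hkR : (0:ℝ) < k := by
    have : (3:ℝ) ≤ k := by exact_mod_cast hk
    linarith
  set X : ℝ := (m:ℝ) + r * k with hXdef
  set Y : ℝ := (m:ℝ) + (↑(r+1) : ℝ) * k with hYdef
  have hrR : (1:ℝ) ≤ r := by exact_mod_cast hr
  have hX0 : 0 < X := by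
    have hm0 : (0:ℝ) ≤ m := Nat.cast_nonneg m
    nlinarith
  have hYX : Y = X + k := by rw [hXdef, hYdef]; push_cast; ring
  have hXY : X < Y := by rw [hYX]; linarith
  have hY0 : 0 < Y := lt_trans hX0 hXY
  set PX := ∏ i ∈ Finset.range k, (X + 1 + (i:ℝ)) with hPXdef
  set PY := ∏ i ∈ Finset.range k, (Y + 1 + (i:ℝ)) with hPYdef
  have hPX0 : 0 < PX := Finset.prod_pos (fun i _ => by positivity)
  have hPY0 : 0 < PY := Finset.prod_pos (fun i _ => by positivity)
  -- Step 1: termwise comparison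
  have step1 : X ^ k * PY < Y ^ k * PX := by
    have h1 : ∏ i ∈ Finset.range k, (X * (Y + 1 + (i:ℝ)))
        < ∏ i ∈ Finset.range k, (Y * (X + 1 + (i:ℝ))) := by
      apply Finset.prod_lt_prod_of_nonempty
      · intro i _; positivity
      · intro i _
        have hi : (0:ℝ) ≤ i := Nat.cast_nonneg i
        nlinarith
      · exact Finset.nonempty_range_iff.mpr (by omega)
    simp only [Finset.prod_mul_distrib, Finset.prod_const, Finset.card_range] at h1
    exact h1
  -- Step 2: key squared inequality
  have hXsplit : X ^ (2*h) = X ^ (2*h - k) * X ^ k := by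
    rw [← pow_add]; congr 1; omega
  have hYsplit : Y ^ (2*h) = Y ^ (2*h - k) * Y ^ k := by
    rw [← pow_add]; congr 1; omega
  have key : X ^ (2*h) * PY < Y ^ (2*h) * PX := by
    have hXp : 0 < X ^ (2*h - k) := by positivity
    calc X ^ (2*h) * PY = X ^ (2*h - k) * (X ^ k * PY) := by rw [hXsplit]; ring
      _ < X ^ (2*h - k) * (Y ^ k * PX) := mul_lt_mul_of_pos_left step1 hXp
      _ ≤ Y ^ (2*h - k) * (Y ^ k * PX) :=
          mul_le_mul_of_nonneg_right (pow_le_pow_left₀ hX0.le hXY.le _) (by positivity)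
      _ = Y ^ (2*h) * PX := by rw [hYsplit]; ring
  -- sqrt versions
  have hsqX : Real.sqrt (X ^ (2*h) * PY) = X ^ h * Real.sqrt PY := by
    rw [Real.sqrt_mul (by positivity), show X ^ (2*h) = (X^h)^2 by ring,
      Real.sqrt_sq (by positivity)]
  have hsqY : Real.sqrt (Y ^ (2*h) * PX) = Y ^ h * Real.sqrt PX := by
    rw [Real.sqrt_mul (by positivity), show Y ^ (2*h) = (Y^h)^2 by ring,
      Real.sqrt_sq (by positivity)]
  have hlt : X ^ h * Real.sqrt PY < Y ^ h * Real.sqrt PX := by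
    rw [← hsqX, ← hsqY]
    exact Real.sqrt_lt_sqrt (by positivity) key
  have hc1 : (0:ℝ) < (k : ℝ) ^ (-(h : ℝ)) := Real.rpow_pos_of_pos hkR _
  have hc2 : (0:ℝ) < (k : ℝ) ^ (-(k : ℝ)/2) := Real.rpow_pos_of_pos hkR _
  have hsPX : (0:ℝ) < Real.sqrt PX := Real.sqrt_pos.mpr hPX0
  have hsPY : (0:ℝ) < Real.sqrt PY := Real.sqrt_pos.mpr hPY0
  rw [hddef r, hddef (r+1), hfdef r, hfdef (r+1), hadef r, hadef (r+1)]
  rw [div_lt_div_iff₀ (by positivity) (by positivity)]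
  have hfinal := mul_lt_mul_of_pos_left hlt (mul_pos hc1 hc2)
  nlinarith [hfinal]
end
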